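/- Fix α > 1, σ > 0, a > 0 and reals θ, c, and define Δ(u) = Φ((a−u)/σ) − Φ((−a−u)/σ). Let p(x) = φ((x−θ)/σ)/(σ·Δ(θ)) and q(x) = φ((x−θ−c)/σ)/(σ·Δ(θ+c)) be the densities on (−a,a) of the truncated Gaussians N^T(θ, σ², [−a,a]) and N^T(θ+c, σ², [−a,a]). Then the Rényi divergence of order α between these two truncated Gaussians satisfies (1/(α−1)) · log ∫_{−a}^{a} p(x)^α · q(x)^{1−α} dx = α·c²/(2σ²) + log( Δ(θ+c)/Δ(θ) ) + (1/(α−1)) · log( Δ(θ+(1−α)c)/Δ(θ) ). -/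
import Mathlib


open MeasureTheory Real Filter

/-- Standard Gaussian density. -/
noncomputable def phi (x : ℝ) : ℝ := (Real.sqrt (2 * Real.pi))⁻¹ * Real.exp (-(x ^ 2) / 2)

/-- Standard Gaussian cumulative distribution function. -/
noncomputable def Phi (x : ℝ) : ℝ := ∫ t in Set.Iic x, phi t

/-- Mass of the Gaussian `N(u, σ²)` on `[−a, a]`. -/
noncomputable def Δ (a σ u : ℝ) : ℝ := Phi ((a - u) / σ) - Phi ((-a - u) / σ)

lemma phi_pos (x : ℝ) : 0 < phi x := by
  unfold phi
  positivity

lemma phi_integrable : Integrable phi := by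
  have h := (integrable_exp_neg_mul_sq (by norm_num : (0:ℝ) < 1/2)).const_mul
      (Real.sqrt (2 * Real.pi))⁻¹
  convert h using 2 with x
  unfold phi
  ring_nf

lemma integral_phi_eq (c d : ℝ) : ∫ x in c..d, phi x = Phi d - Phi c := by
  rw [← intervalIntegral.integral_Iic_sub_Iic phi_integrable.integrableOn
    phi_integrable.integrableOn]
  rfl

lemma integral_phi_shift (σ a m : ℝ) (hσ : 0 < σ) :
    ∫ x in (-a)..a, phi ((x - m) / σ) = σ * Δ a σ m := by
  have h1 : ∫ x in (-a)..a, phi ((x - m) / σ)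
      = ∫ x in (-a - m)..(a - m), phi (x / σ) :=
    intervalIntegral.integral_comp_sub_right (fun y => phi (y / σ)) m
  rw [h1, intervalIntegral.integral_comp_div (fun y => phi y) hσ.ne',
    integral_phi_eq, smul_eq_mul, Δ]

lemma delta_pos (a σ u : ℝ) (hσ : 0 < σ) (ha : 0 < a) : 0 < Δ a σ u := by
  rw [Δ, ← integral_phi_eq]
  apply intervalIntegral.intervalIntegral_pos_of_pos
    phi_integrable.intervalIntegrable phi_pos
  gcongr
  linarith

/-- Closed form for the Rényi divergence of order `α` between the truncated
Gaussians `N^T(θ, σ², [−a,a])` and `N^T(θ+c, σ², [−a,a])`. -/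
theorem truncated_gaussian_renyi_divergence (α σ a θ c : ℝ)
    (hα : 1 < α) (hσ : 0 < σ) (ha : 0 < a) :
    (1 / (α - 1)) *
        Real.log (∫ x in (-a)..a,
          (phi ((x - θ) / σ) / (σ * Δ a σ θ)) ^ α *
            (phi ((x - θ - c) / σ) / (σ * Δ a σ (θ + c))) ^ (1 - α)) =
      α * c ^ 2 / (2 * σ ^ 2) + Real.log (Δ a σ (θ + c) / Δ a σ θ) +
        (1 / (α - 1)) * Real.log (Δ a σ (θ + (1 - α) * c) / Δ a σ θ) := by
  have hσ' : σ ≠ 0 := hσ.ne'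
  have hα1 : α - 1 ≠ 0 := sub_ne_zero.mpr hα.ne'
  have h1 : 0 < Δ a σ θ := delta_pos _ _ _ hσ ha
  have h2 : 0 < Δ a σ (θ + c) := delta_pos _ _ _ hσ ha
  have h3 : 0 < Δ a σ (θ + (1 - α) * c) := delta_pos _ _ _ hσ ha
  have hA : 0 < σ * Δ a σ θ := by positivity
  have hB : 0 < σ * Δ a σ (θ + c) := by positivity
  set E : ℝ := α * (α - 1) * c ^ 2 / (2 * σ ^ 2) - α * Real.log (σ * Δ a σ θ)
      + (α - 1) * Real.log (σ * Δ a σ (θ + c)) with hE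
  have hC : (0:ℝ) < (Real.sqrt (2 * Real.pi))⁻¹ := by positivity
  have hrw : ∀ y : ℝ, Real.log (phi y)
      = Real.log (Real.sqrt (2 * Real.pi))⁻¹ + (-(y ^ 2) / 2) := by
    intro y; unfold phi
    rw [Real.log_mul hC.ne' (Real.exp_ne_zero _), Real.log_exp]
  have key : ∀ x : ℝ, (phi ((x - θ) / σ) / (σ * Δ a σ θ)) ^ α *
      (phi ((x - θ - c) / σ) / (σ * Δ a σ (θ + c))) ^ (1 - α)
      = Real.exp E * phi ((x - (θ + (1 - α) * c)) / σ) := by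
    intro x
    have hp1 : 0 < phi ((x - θ) / σ) / (σ * Δ a σ θ) := by
      have := phi_pos ((x - θ) / σ); positivity
    have hp2 : 0 < phi ((x - θ - c) / σ) / (σ * Δ a σ (θ + c)) := by
      have := phi_pos ((x - θ - c) / σ); positivity
    have hRHS : Real.exp E * phi ((x - (θ + (1 - α) * c)) / σ)
        = Real.exp (E + Real.log (phi ((x - (θ + (1 - α) * c)) / σ))) := by
      rw [Real.exp_add E (Real.log (phi ((x - (θ + (1 - α) * c)) / σ))),
        Real.exp_log (phi_pos _)]
    rw [Real.rpow_def_of_pos hp1, Real.rpow_def_of_pos hp2, ← Real.exp_add, hRHS]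
    congr 1
    rw [Real.log_div (phi_pos _).ne' hA.ne', Real.log_div (phi_pos _).ne' hB.ne',
      hrw, hrw, hrw, hE]
    field_simp
    ring
  simp only [key]
  rw [intervalIntegral.integral_const_mul, integral_phi_shift σ a _ hσ,
    Real.log_mul (Real.exp_ne_zero _) (by positivity), Real.log_exp, hE,
    Real.log_mul hσ' h3.ne', Real.log_mul hσ' h1.ne', Real.log_mul hσ' h2.ne',
    Real.log_div h2.ne' h1.ne', Real.log_div h3.ne' h1.ne']
  field_simp
  ring
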